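/- arXiv:2111.13144 — 3 statements merged into one kernel-verified Lean document; each statement's English description precedes it below -/
import Mathlib

section
/- Let ε_child > 0, ε_eval > 0 and y* ∈ (0,1]. Let s : ℕ → ℝ, c : ℕ → ℝ and L : ℕ → ℝ satisfy: s 0 ≤ 1; for all n, s (n+1) ≤ s n − ε_child; for all n, 0 ≤ c n and c n ≤ (1 − s n)/ε_eval; L 0 = 1 + c 0; and for all n, L (n+1) = 1 + c (n+1) + L n. Then for every n with s n ≥ y*, one has n ≤ (1 − y*)/ε_child and L n ≤ ((1 − y*)/ε_child + 1) · (1 + (1 − y*)/ε_eval). -/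
/-!
Along the chain the scores drop by at least `ε_child` per step from at most `1`, so a stream
with score `≥ y*` sits at depth `n ≤ (1 - y*)/ε_child`. Every stream above it has score `≥ y*`
too, hence at most `(1 - y*)/ε_eval` evaluations, and its level is the sum of the `n + 1`
terms `1 + c k`.
-/

open Finset

section

variable {α : Type*} [Field α] [LinearOrder α] [IsStrictOrderedRing α]

theorem le_sub_mul_of_succ_le_sub {s : ℕ → α} {ε : α} (hs : ∀ n, s (n + 1) ≤ s n - ε) (n : ℕ) :
    s n ≤ s 0 - n * ε := by
  induction n with
  | zero => simp
  | succ k ih =>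
    push_cast
    linarith [hs k]

theorem natCast_le_div_of_succ_le_sub {s : ℕ → α} {ε y : α} (hε : 0 < ε) (hs0 : s 0 ≤ 1)
    (hs : ∀ n, s (n + 1) ≤ s n - ε) {n : ℕ} (hy : y ≤ s n) :
    (n : α) ≤ (1 - y) / ε := by
  rw [le_div_iff₀ hε]
  linarith [le_sub_mul_of_succ_le_sub hs n]

end

theorem eq_sum_range_of_succ_eq_add {M : Type*} [AddCommMonoid M] {L a : ℕ → M}
    (hL0 : L 0 = a 0) (hL : ∀ n, L (n + 1) = a (n + 1) + L n) (n : ℕ) :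
    L n = ∑ k ∈ range (n + 1), a k := by
  induction n with
  | zero => simp [hL0]
  | succ k ih => rw [hL, ih, sum_range_succ _ (k + 1), add_comm]

theorem informed_level_bound_general
    (ε_child ε_eval : ℝ) (hεc : 0 < ε_child) (hεe : 0 < ε_eval)
    (ystar : ℝ) (hy : ystar ∈ Set.Ioc (0 : ℝ) 1)
    (s c L : ℕ → ℝ)
    (hs0 : s 0 ≤ 1)
    (hs : ∀ n, s (n + 1) ≤ s n - ε_child)
    (hc : ∀ n, c n ≤ (1 - s n) / ε_eval)
    (hL0 : L 0 = 1 + c 0)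
    (hL : ∀ n, L (n + 1) = 1 + c (n + 1) + L n) :
    ∀ n, s n ≥ ystar →
      (n : ℝ) ≤ (1 - ystar) / ε_child ∧
      L n ≤ ((1 - ystar) / ε_child + 1) * (1 + (1 - ystar) / ε_eval) := by
  intro n hsn
  have hdepth := natCast_le_div_of_succ_le_sub hεc hs0 hs hsn
  have hanti : Antitone s := antitone_nat_of_succ_le fun k ↦ by linarith [hs k]
  have hcount : ∀ k ∈ range (n + 1), 1 + c k ≤ 1 + (1 - ystar) / ε_eval := fun k hk ↦ by
    have hsk : ystar ≤ s k := hsn.trans (hanti (Nat.lt_succ_iff.mp (mem_range.mp hk)))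
    grw [hc k, hsk]
  have hB : 0 ≤ 1 + (1 - ystar) / ε_eval := by
    have := div_nonneg (sub_nonneg.mpr hy.2) hεe.le
    linarith
  refine ⟨hdepth, ?_⟩
  calc L n = ∑ k ∈ range (n + 1), (1 + c k) := eq_sum_range_of_succ_eq_add hL0 hL n
    _ ≤ (n + 1) * (1 + (1 - ystar) / ε_eval) := by
      have := sum_le_card_nsmul _ _ _ hcount
      rwa [card_range, nsmul_eq_mul, Nat.cast_succ] at this
    _ ≤ ((1 - ystar) / ε_child + 1) * (1 + (1 - ystar) / ε_eval) := by gcongr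

theorem informed_level_bound
    (ε_child ε_eval : ℝ) (hεc : 0 < ε_child) (hεe : 0 < ε_eval)
    (ystar : ℝ) (hy : ystar ∈ Set.Ioc (0 : ℝ) 1)
    (s c L : ℕ → ℝ)
    (hs0 : s 0 ≤ 1)
    (hs : ∀ n, s (n + 1) ≤ s n - ε_child)
    (hc_nonneg : ∀ n, 0 ≤ c n)
    (hc : ∀ n, c n ≤ (1 - s n) / ε_eval)
    (hL0 : L 0 = 1 + c 0)
    (hL : ∀ n, L (n + 1) = 1 + c (n + 1) + L n) :
    ∀ n, s n ≥ ystar →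
      (n : ℝ) ≤ (1 - ystar) / ε_child ∧
      L n ≤ ((1 - ystar) / ε_child + 1) * (1 + (1 - ystar) / ε_eval) :=
  informed_level_bound_general ε_child ε_eval hεc hεe ystar hy s c L hs0 hs hc hL0 hL
end

section
/- Let ε_child > 0 and ε_eval > 0, and let f : ℝ → ℝ satisfy f y ≤ 0 for all y > 1, and f y ≤ 1 + (1 − y)/ε_eval + f (y + ε_child) for all y ≤ 1. Then for every y* ∈ (0,1], f y* ≤ (⌊(1 − y*)/ε_child⌋ + 1) · (1 + (1 − y*)/ε_eval). -/
/-!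
Unrolling the recursion from `y` adds `ε_child` to the score at each step, and after
`⌊(1 - y) / ε_child⌋ + 1` steps the score exceeds `1`, where `f ≤ 0`. Each step
contributes at most `1 + (1 - y) / ε_eval`, because this cost only decreases as the score grows.
-/

theorem le_succ_mul_of_le_add_shift {f g : ℝ → ℝ} {b ε : ℝ} (hε : 0 ≤ ε) (hg : Antitone g)
    (h_base : ∀ y, b < y → f y ≤ 0) (h_rec : ∀ y ≤ b, f y ≤ g y + f (y + ε)) (n : ℕ) :
    ∀ y, n * ε ≤ b - y → b - y < (n + 1) * ε → f y ≤ (n + 1) * g y := by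
  induction n with
  | zero =>
    intro y hy_le hy_lt
    simp only [Nat.cast_zero, zero_mul, zero_add, one_mul] at hy_le hy_lt ⊢
    linarith [h_rec y (by linarith), h_base (y + ε) (by linarith)]
  | succ n ih =>
    intro y hy_le hy_lt
    push_cast at hy_le hy_lt ⊢
    have hy : y + ε ≤ b := by linarith [mul_nonneg n.cast_nonneg hε]
    have h_next : f (y + ε) ≤ (n + 1) * g (y + ε) :=
      ih (y + ε) (by linarith) (by linarith)
    have h_mono : (n + 1) * g (y + ε) ≤ (n + 1) * g y :=
      mul_le_mul_of_nonneg_left (hg (by linarith)) (by positivity)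
    linarith [h_rec y (by linarith)]

theorem le_floor_succ_mul_of_le_add_shift {f g : ℝ → ℝ} {b ε : ℝ} (hε : 0 < ε)
    (hg : Antitone g) (h_base : ∀ y, b < y → f y ≤ 0)
    (h_rec : ∀ y ≤ b, f y ≤ g y + f (y + ε)) {y : ℝ} (hy : y ≤ b) :
    f y ≤ (⌊(b - y) / ε⌋₊ + 1) * g y := by
  have h_nonneg : 0 ≤ (b - y) / ε := div_nonneg (by linarith) hε.le
  refine le_succ_mul_of_le_add_shift hε.le hg h_base h_rec _ y ?_ ?_
  · exact (le_div_iff₀ hε).mp (Nat.floor_le h_nonneg)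
  · exact (div_lt_iff₀ hε).mp (Nat.lt_floor_add_one _)

theorem level_recursion_closed_form
    (ε_child ε_eval : ℝ) (hεc : 0 < ε_child) (hεe : 0 < ε_eval)
    (f : ℝ → ℝ)
    (h_base : ∀ y : ℝ, 1 < y → f y ≤ 0)
    (h_rec : ∀ y : ℝ, y ≤ 1 → f y ≤ 1 + (1 - y) / ε_eval + f (y + ε_child)) :
    ∀ ystar : ℝ, ystar ∈ Set.Ioc (0 : ℝ) 1 →
      f ystar ≤ ((⌊(1 - ystar) / ε_child⌋ : ℝ) + 1) * (1 + (1 - ystar) / ε_eval) := by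
  rintro ystar ⟨-, hy⟩
  have h_cost : Antitone fun y : ℝ => 1 + (1 - y) / ε_eval := fun a b hab => by
    dsimp only
    gcongr
  rw [← natCast_floor_eq_intCast_floor (div_nonneg (by linarith) hεc.le)]
  exact le_floor_succ_mul_of_le_add_shift hεc h_cost h_base h_rec hy
end

section
/- Let X be a type, σ : X → ℝ a score function, y* ∈ ℝ, and suppose the set G = {x : X | σ x ≥ y*} is finite with cardinality N. Let F ⊆ G, and let p : ℕ → X be an injective sequence such that for every n : ℕ, if there exists x ∈ F with x ∉ p '' (Set.Iio n), then σ (p n) ≥ y*. Then F ⊆ p '' (Set.Iio N). -/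
open Set

theorem Function.Injective.le_ncard_of_image_Iio_subset {α : Type*} {p : ℕ → α}
    (hp : p.Injective) {s : Set α} (hs : s.Finite) {n : ℕ} (h : p '' Iio n ⊆ s) :
    n ≤ s.ncard :=
  calc n = (p '' Iio n).ncard := by rw [ncard_image_of_injective _ hp, ncard_Iio_nat]
    _ ≤ s.ncard := ncard_le_ncard h hs

/-- If `x` has not appeared among the first `s.ncard + 1` values, these are distinct elements of
`s`, which is too many. -/
theorem Function.Injective.mem_image_Iio_ncard {α : Type*} {p : ℕ → α} (hp : p.Injective)
    {s : Set α} (hs : s.Finite) {x : α} (hstep : ∀ n, x ∉ p '' Iio n → p n ∈ s) :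
    x ∈ p '' Iio s.ncard := by
  by_contra hx
  have hsub : p '' Iio (s.ncard + 1) ⊆ s := by
    rintro _ ⟨n, hn, rfl⟩
    exact hstep n fun hxn => hx (image_mono (Iio_subset_Iio (Nat.lt_succ_iff.mp hn)) hxn)
  have := hp.le_ncard_of_image_Iio_subset hs hsub
  omega

theorem best_first_exhaustion_general
    {X : Type*} (σ : X → ℝ) (ystar : ℝ)
    (G : Set X) (hG : G = {x : X | σ x ≥ ystar})
    (hGfin : G.Finite) (N : ℕ) (hN : G.ncard = N)
    (F : Set X)
    (p : ℕ → X) (hp : Function.Injective p)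
    (hpop : ∀ n : ℕ, (∃ x ∈ F, x ∉ p '' Set.Iio n) → σ (p n) ≥ ystar) :
    F ⊆ p '' Set.Iio N := by
  intro x hx
  rw [← hN]
  refine hp.mem_image_Iio_ncard hGfin fun n hxn => ?_
  rw [hG]
  exact hpop n ⟨x, hx, hxn⟩

theorem best_first_exhaustion
    {X : Type*} (σ : X → ℝ) (ystar : ℝ)
    (G : Set X) (hG : G = {x : X | σ x ≥ ystar})
    (hGfin : G.Finite) (N : ℕ) (hN : G.ncard = N)
    (F : Set X) (hF : F ⊆ G)
    (p : ℕ → X) (hp : Function.Injective p)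
    (hpop : ∀ n : ℕ, (∃ x ∈ F, x ∉ p '' Set.Iio n) → σ (p n) ≥ ystar) :
    F ⊆ p '' Set.Iio N :=
  best_first_exhaustion_general σ ystar G hG hGfin N hN F p hp hpop
end
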